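/- arXiv:1602.06901 — 2 statements merged into one kernel-verified Lean document; each statement's English description precedes it below -/
import Mathlib

section
/- In a ring of characteristic p (p prime), if elements x and y satisfy yx - xy = y, then the element z = x + y satisfies z^p - z = x^p - x + y^p. -/
open Polynomial Finset

noncomputable def asC (p : ℕ) : ℕ → ℕ → Polynomial (ZMod p)
  | 0, 0 => 1
  | 0, _+1 => 0
  | n+1, 0 => asC p n 0 * X
  | n+1, k+1 => asC p n (k+1) * (X + ((k : Polynomial (ZMod p)) + 1)) + asC p n k

lemma asC_eq_zero (p : ℕ) : ∀ n k, n < k → asC p n k = 0 := by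
  intro n
  induction n with
  | zero => intro k hk; match k, hk with | k+1, _ => rfl
  | succ n ih =>
    intro k hk
    match k, hk with
    | k+1, hk =>
      show asC p n (k+1) * _ + asC p n k = 0
      rw [ih (k+1) (by omega), ih k (by omega), zero_mul, zero_add]

lemma asC_diag (p : ℕ) : ∀ n, asC p n n = 1 := by
  intro n
  induction n with
  | zero => rfl
  | succ n ih =>
    show asC p n (n+1) * _ + asC p n n = 1
    rw [asC_eq_zero p n (n+1) (by omega), ih, zero_mul, zero_add]

lemma asC_bottom (p : ℕ) : ∀ n, asC p n 0 = X ^ n := by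
  intro n
  induction n with
  | zero => rfl
  | succ n ih => show asC p n 0 * X = _; rw [ih, ← pow_succ]

lemma T_eq (p : ℕ) : ∀ n k, ((-1) ^ k * (k.factorial : Polynomial (ZMod p))) * asC p n k
    = ∑ j ∈ range (k+1), (-1) ^ j * (k.choose j : Polynomial (ZMod p)) *
        (X + (j : Polynomial (ZMod p))) ^ n := by
  intro n
  induction n with
  | zero =>
    intro k
    have hcast : ((∑ i ∈ range (k+1), (-1) ^ i * (k.choose i : ℤ) : ℤ) : Polynomial (ZMod p))
        = ∑ j ∈ range (k+1), (-1) ^ j * (k.choose j : Polynomial (ZMod p)) *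
            (X + (j : Polynomial (ZMod p))) ^ 0 := by
      push_cast
      simp
    rw [← hcast, Int.alternating_sum_range_choose]
    match k with
    | 0 => simp [asC]
    | k+1 => simp [asC_eq_zero p 0 (k+1) (by omega)]
  | succ n ih =>
    intro k
    match k with
    | 0 =>
      simp only [pow_zero, Nat.factorial_zero, Nat.cast_one, one_mul, mul_one, range_one,
        sum_singleton, Nat.cast_zero, add_zero, Nat.choose_self, Nat.cast_ofNat]
      rw [asC_bottom]
      simp
    | k+1 =>
      have hchP : ∀ j ∈ range (k+1), ((k.choose j : Polynomial (ZMod p))) *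
          ((k:Polynomial (ZMod p)) + 1)
          = ((k+1).choose j : Polynomial (ZMod p)) *
            ((k:Polynomial (ZMod p)) + 1 - (j : Polynomial (ZMod p))) := by
        intro j hj
        rw [Finset.mem_range] at hj
        have hch : (k.choose j) * (k + 1) = ((k+1).choose j) * (k + 1 - j) :=
          Nat.choose_mul_succ_eq k j
        have := congrArg (fun m : ℕ => (m : Polynomial (ZMod p))) hch
        push_cast [Nat.cast_sub (by omega : j ≤ k + 1)] at this
        linear_combination this
      have hsum : (∑ j ∈ range (k+2), (-1) ^ j * ((k+1).choose j : Polynomial (ZMod p)) *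
              (X + (j : Polynomial (ZMod p))) ^ (n+1))
          = (∑ j ∈ range (k+2), (-1) ^ j * ((k+1).choose j : Polynomial (ZMod p)) *
              (X + (j : Polynomial (ZMod p))) ^ n) * (X + ((k : Polynomial (ZMod p)) + 1))
            - ((k : Polynomial (ZMod p)) + 1) *
              ∑ j ∈ range (k+1), (-1) ^ j * (k.choose j : Polynomial (ZMod p)) *
                (X + (j : Polynomial (ZMod p))) ^ n := by
        have key : ∀ j ∈ range (k+2), (-1) ^ j * ((k+1).choose j : Polynomial (ZMod p)) *
            (X + (j : Polynomial (ZMod p))) ^ (n+1)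
            = (-1) ^ j * ((k+1).choose j : Polynomial (ZMod p)) *
                (X + (j : Polynomial (ZMod p))) ^ n * (X + ((k : Polynomial (ZMod p)) + 1))
              - (-1) ^ j * ((k+1).choose j : Polynomial (ZMod p)) *
                (X + (j : Polynomial (ZMod p))) ^ n *
                  (((k : Polynomial (ZMod p)) + 1) - (j : Polynomial (ZMod p))) := by
          intro j _
          ring
        rw [Finset.sum_congr rfl key, Finset.sum_sub_distrib]
        congr 1
        · exact (Finset.sum_mul _ _ _).symm
        · rw [Finset.sum_range_succ, Finset.mul_sum]
          have hz : (-1) ^ (k+1) * ((k+1).choose (k+1) : Polynomial (ZMod p)) *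
              (X + ((k+1 : ℕ) : Polynomial (ZMod p))) ^ n *
                (((k : Polynomial (ZMod p)) + 1) - ((k+1 : ℕ) : Polynomial (ZMod p))) = 0 := by
            push_cast
            ring
          rw [hz, add_zero]
          refine Finset.sum_congr rfl fun j hj => ?_
          linear_combination (-((-1 : Polynomial (ZMod p)) ^ j *
            (X + (j : Polynomial (ZMod p))) ^ n)) * hchP j hj
      rw [hsum, ← ih (k+1), ← ih k]
      show ((-1) ^ (k+1) * ((k+1).factorial : Polynomial (ZMod p))) *
          (asC p n (k+1) * (X + ((k : Polynomial (ZMod p)) + 1)) + asC p n k) = _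
      rw [Nat.factorial_succ]
      push_cast
      ring

lemma natCast_pow_card (p : ℕ) [Fact p.Prime] (j : ℕ) :
    ((j : Polynomial (ZMod p))) ^ p = (j : Polynomial (ZMod p)) := by
  rw [← Polynomial.C_eq_natCast, ← map_pow, ZMod.pow_card]

lemma frob_add (p : ℕ) [Fact p.Prime] (j : ℕ) :
    (X + (j : Polynomial (ZMod p))) ^ p = X ^ p + (j : Polynomial (ZMod p)) := by
  rw [add_pow_char, natCast_pow_card]

lemma asC_p_one (p : ℕ) [Fact p.Prime] : asC p p 1 = 1 := by
  have ht := T_eq p p 1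
  have : ∑ j ∈ range 2, (-1) ^ j * ((1:ℕ).choose j : Polynomial (ZMod p)) *
      (X + (j : Polynomial (ZMod p))) ^ p = -1 := by
    rw [Finset.sum_range_succ, Finset.sum_range_one, frob_add, frob_add]
    norm_num
  rw [this] at ht
  simpa using ht

lemma asC_p_mid (p : ℕ) [Fact p.Prime] (k : ℕ) (h2 : 2 ≤ k) (hkp : k < p) :
    asC p p k = 0 := by
  have ht := T_eq p p k
  have hT : ∑ j ∈ range (k+1), (-1) ^ j * (k.choose j : Polynomial (ZMod p)) *
      (X + (j : Polynomial (ZMod p))) ^ p = 0 := by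
    have hsplit : ∀ j ∈ range (k+1), (-1) ^ j * (k.choose j : Polynomial (ZMod p)) *
        (X + (j : Polynomial (ZMod p))) ^ p
        = (-1) ^ j * (k.choose j : Polynomial (ZMod p)) * X ^ p
          + (-1) ^ j * (k.choose j : Polynomial (ZMod p)) * (j : Polynomial (ZMod p)) := by
      intro j _
      rw [frob_add]
      ring
    rw [Finset.sum_congr rfl hsplit, Finset.sum_add_distrib]
    have hA : ∑ j ∈ range (k+1), (-1) ^ j * (k.choose j : Polynomial (ZMod p)) * X ^ p = 0 := by
      rw [← Finset.sum_mul]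
      have : ((∑ i ∈ range (k+1), (-1) ^ i * (k.choose i : ℤ) : ℤ) : Polynomial (ZMod p))
          = ∑ j ∈ range (k+1), (-1) ^ j * (k.choose j : Polynomial (ZMod p)) := by
        push_cast
        ring
      rw [← this, Int.alternating_sum_range_choose_of_ne (by omega : k ≠ 0)]
      simp
    have hBZ : (∑ j ∈ range (k+1), (-1) ^ j * (k.choose j : ℤ) * (j : ℤ)) = 0 := by
      obtain ⟨m, rfl⟩ : ∃ m, k = m + 1 := ⟨k - 1, by omega⟩
      rw [Finset.sum_range_succ']
      have hterm : ∀ i ∈ range (m+1), (-1) ^ (i+1) * ((m+1).choose (i+1) : ℤ) * ((i+1 : ℕ) : ℤ)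
          = -((m:ℤ)+1) * ((-1) ^ i * ((m.choose i : ℤ))) := by
        intro i _
        have hch : (m+1) * m.choose i = (m+1).choose (i+1) * (i+1) :=
          Nat.add_one_mul_choose_eq m i
        have := congrArg (fun t : ℕ => (t : ℤ)) hch
        push_cast at this
        push_cast
        linear_combination (-(1:ℤ))^i * this
      rw [Finset.sum_congr rfl hterm, ← Finset.mul_sum,
        Int.alternating_sum_range_choose_of_ne (by omega : m ≠ 0)]
      simp
    have hB : ∑ j ∈ range (k+1), (-1) ^ j * (k.choose j : Polynomial (ZMod p)) *
        (j : Polynomial (ZMod p)) = 0 := by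
      have : ((∑ j ∈ range (k+1), (-1) ^ j * (k.choose j : ℤ) * (j : ℤ) : ℤ) : Polynomial (ZMod p))
          = ∑ j ∈ range (k+1), (-1) ^ j * (k.choose j : Polynomial (ZMod p)) *
            (j : Polynomial (ZMod p)) := by
        push_cast
        ring
      rw [← this, hBZ]
      simp
    rw [hA, hB, add_zero]
  rw [hT] at ht
  have hfac : ((k.factorial : Polynomial (ZMod p))) ≠ 0 := by
    rw [← Polynomial.C_eq_natCast, Ne, Polynomial.C_eq_zero]
    intro hc
    have := (ZMod.natCast_eq_zero_iff _ _).mp hc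
    have hle := (Nat.Prime.dvd_factorial (Fact.out : p.Prime)).mp this
    omega
  have hne : ((-1 : Polynomial (ZMod p)) ^ k * (k.factorial : Polynomial (ZMod p))) ≠ 0 := by
    apply mul_ne_zero _ hfac
    exact pow_ne_zero _ (by norm_num)
  rcases mul_eq_zero.mp ht with hc | hc
  · exact absurd hc hne
  · exact hc

lemma expand (p : ℕ) (R : Type) [Ring R] (x y : R) (h' : y * x = x * y + y)
    (φ : Polynomial (ZMod p) →+* R) (hX : φ X = x) :
    ∀ n, (x + y) ^ n = ∑ k ∈ range (n+1), φ (asC p n k) * y ^ k := by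
  have hyk : ∀ k : ℕ, y ^ k * x = (x + (k : R)) * y ^ k := by
    intro k
    induction k with
    | zero => simp
    | succ k ihk =>
      have : y ^ (k+1) * x = (y ^ k * x) * y + y ^ (k+1) := by
        rw [pow_succ, mul_assoc, h', mul_add, ← mul_assoc, ← pow_succ]
      rw [this, ihk]
      push_cast
      noncomm_ring
  intro n
  induction n with
  | zero => simp [asC]
  | succ n ih =>
    calc (x + y) ^ (n+1) = ((x + y) ^ n) * (x + y) := pow_succ _ _
    _ = ∑ k ∈ range (n+1),
        (φ (asC p n k * (X + (k : Polynomial (ZMod p)))) * y ^ k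
          + φ (asC p n k) * y ^ (k+1)) := by
      rw [ih, Finset.sum_mul]
      refine Finset.sum_congr rfl fun k hk => ?_
      rw [mul_add]
      congr 1
      · rw [mul_assoc, hyk k, map_mul, map_add, hX, map_natCast, ← mul_assoc]
      · rw [mul_assoc, ← pow_succ]
    _ = ∑ k ∈ range (n+2), φ (asC p (n+1) k) * y ^ k := by
      rw [Finset.sum_add_distrib]
      have hdef : ∀ i : ℕ, asC p (n+1) (i+1)
          = asC p n (i+1) * (X + ((i : Polynomial (ZMod p)) + 1)) + asC p n i := fun i => rfl
      have hdef0 : asC p (n+1) 0 = asC p n 0 * X := rfl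
      rw [Finset.sum_range_succ' (fun k => φ (asC p (n+1) k) * y ^ k) (n+1)]
      have hsplit : ∀ i ∈ range (n+1), φ (asC p (n+1) (i+1)) * y ^ (i+1)
          = φ (asC p n (i+1) * (X + ((i : Polynomial (ZMod p)) + 1))) * y ^ (i+1)
            + φ (asC p n i) * y ^ (i+1) := by
        intro i _
        rw [hdef i, map_add, add_mul]
      rw [Finset.sum_congr rfl hsplit, Finset.sum_add_distrib,
        Finset.sum_range_succ' (fun k => φ (asC p n k * (X + (k : Polynomial (ZMod p)))) * y ^ k) n,
        Finset.sum_range_succ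
          (fun i => φ (asC p n (i+1) * (X + ((i : Polynomial (ZMod p)) + 1))) * y ^ (i+1)) n,
        asC_eq_zero p n (n+1) (by omega)]
      have hcast : ∀ i ∈ range n,
          φ (asC p n (i+1) * (X + (((i+1 : ℕ)) : Polynomial (ZMod p)))) * y ^ (i+1)
          = φ (asC p n (i+1) * (X + ((i : Polynomial (ZMod p)) + 1))) * y ^ (i+1) := by
        intro i _
        push_cast
        ring_nf
      rw [Finset.sum_congr rfl hcast, hdef0]
      simp only [Nat.cast_zero, add_zero, pow_zero, mul_one, zero_mul, map_zero]
      abel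

/-- In a ring of characteristic `p` (`p` prime), if `y * x - x * y = y`, then
`z = x + y` satisfies `z ^ p - z = x ^ p - x + y ^ p`. -/
theorem artinSchreier_add (p : ℕ) (hp : p.Prime) (R : Type) [Ring R] [CharP R p]
    (x y : R) (h : y * x - x * y = y) :
    (x + y) ^ p - (x + y) = x ^ p - x + y ^ p := by
  haveI : Fact p.Prime := ⟨hp⟩
  haveI : NeZero p := ⟨hp.ne_zero⟩
  have h' : y * x = x * y + y := sub_eq_iff_eq_add'.mp h
  have hcomm : ∀ a : ZMod p, Commute ((ZMod.castHom dvd_rfl R) a) x := by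
    intro a
    have ha : (ZMod.castHom dvd_rfl R) a = ((a.val : ℕ) : R) := by
      rw [ZMod.castHom_apply, ← ZMod.natCast_val]
    rw [ha]
    exact Nat.cast_commute _ _
  set φ : Polynomial (ZMod p) →+* R :=
    Polynomial.eval₂RingHom' (ZMod.castHom dvd_rfl R) x hcomm with hφ
  have hX : φ X = x := Polynomial.eval₂_X _ _
  have hexp := expand p R x y h' φ hX p
  have hsum : ∑ k ∈ range (p+1), φ (asC p p k) * y ^ k = x ^ p + y + y ^ p := by
    rw [Finset.range_eq_Ico,
      ← Finset.sum_Ico_consecutive _ (show (0:ℕ) ≤ 2 by omega) (show 2 ≤ p + 1 by have := hp.two_le; omega)]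
    have h02 : Finset.Ico 0 2 = Finset.range 2 := by rw [Finset.range_eq_Ico]
    rw [h02, Finset.sum_range_succ, Finset.sum_range_one]
    have h0 : φ (asC p p 0) * y ^ 0 = x ^ p := by
      rw [asC_bottom, map_pow, hX, pow_zero, mul_one]
    have h1 : φ (asC p p 1) * y ^ 1 = y := by
      rw [asC_p_one, map_one, one_mul, pow_one]
    have hrest : ∑ k ∈ Finset.Ico 2 (p+1), φ (asC p p k) * y ^ k = y ^ p := by
      rw [Finset.sum_eq_single_of_mem p (Finset.mem_Ico.mpr ⟨hp.two_le, by omega⟩)]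
      · rw [asC_diag, map_one, one_mul]
      · intro b hb hbp
        rw [Finset.mem_Ico] at hb
        rw [asC_p_mid p b hb.1 (by omega), map_zero, zero_mul]
    rw [h0, h1, hrest]
  rw [hexp, hsum]
  abel
end

section
/- Let F be a field of characteristic p and α ∈ F, β ∈ F×. The symbol algebra [α,β)_{p,F} = F⟨x,y : x^p - x = α, y^p = β, yx - xy = y⟩ satisfies [α,β)_{p,F} ≅ [α+β, β)_{p,F}. -/
open scoped TensorProduct

/-- The defining relations of the symbol `p`-algebra
`[a,b)_{p,F} = F⟨x,y : x^p - x = a, y^p = b, yx - xy = y⟩`. -/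
inductive SymbolRel (F : Type) [Field F] (p : ℕ) (a b : F) :
    FreeAlgebra F (Fin 2) → FreeAlgebra F (Fin 2) → Prop
  | x : SymbolRel F p a b (FreeAlgebra.ι F 0 ^ p - FreeAlgebra.ι F 0) (algebraMap F _ a)
  | y : SymbolRel F p a b (FreeAlgebra.ι F 1 ^ p) (algebraMap F _ b)
  | comm : SymbolRel F p a b
      (FreeAlgebra.ι F 1 * FreeAlgebra.ι F 0 - FreeAlgebra.ι F 0 * FreeAlgebra.ι F 1)
      (FreeAlgebra.ι F 1)

/-- The symbol `p`-algebra `[a,b)_{p,F}`. -/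
abbrev SymbolAlg (F : Type) [Field F] (p : ℕ) (a b : F) : Type :=
  RingQuot (SymbolRel F p a b)

/-!
With `Δ f = f(X + 1) - f`, the relation `y x = (x + 1) y` puts `(x + y)ⁿ` in the normal order
`∑ₖ cₙₖ(x) yᵏ`, where `Δ cₙₖ = (k + 1) cₙ,ₖ₊₁`, i.e. `k! cₙₖ = Δᵏ Xⁿ`. In characteristic `p` we
have `Δ Xᵖ = 1`, so `cₚ₁ = 1` and the coefficients `cₚₖ` with `1 < k < p` vanish, which gives
`(x + y)ᵖ = xᵖ + yᵖ + y`. Hence `(x + y, y)` satisfies the relations of `[α + β, β)` and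
`(x - y, y)` those of `[α, β)`, and the two homomorphisms they induce are mutually inverse.
-/

open Polynomial

section NormalOrder

variable (R : Type*) [CommRing R]

noncomputable def normalOrderCoeff : ℕ → ℕ → R[X]
  | 0, 0 => 1
  | 0, _ + 1 => 0
  | n + 1, 0 => normalOrderCoeff n 0 * X
  | n + 1, k + 1 =>
    normalOrderCoeff n (k + 1) * (X + ((k + 1 : ℕ) : R[X])) + normalOrderCoeff n k

variable {R}

lemma normalOrderCoeff_zero_right (n : ℕ) : normalOrderCoeff R n 0 = X ^ n := by
  induction n with
  | zero => rfl
  | succ n ih => rw [normalOrderCoeff, ih, pow_succ]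

lemma normalOrderCoeff_of_lt : ∀ {n k : ℕ}, n < k → normalOrderCoeff R n k = 0
  | 0, _ + 1, _ => rfl
  | n + 1, k + 1, h => by
    rw [normalOrderCoeff, normalOrderCoeff_of_lt (by omega : n < k + 1),
      normalOrderCoeff_of_lt (by omega : n < k), zero_mul, zero_add]

lemma normalOrderCoeff_self (n : ℕ) : normalOrderCoeff R n n = 1 := by
  induction n with
  | zero => rfl
  | succ n ih =>
    rw [normalOrderCoeff, normalOrderCoeff_of_lt n.lt_succ_self, ih, zero_mul, zero_add]

lemma taylor_one_mul_X_add_natCast_sub (f : R[X]) (c : ℕ) :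
    taylor 1 (f * (X + (c : R[X]))) - f * (X + (c : R[X])) =
      (taylor 1 f - f) * (X + ((c + 1 : ℕ) : R[X])) + f := by
  rw [taylor_mul, map_add, taylor_X, ← C_eq_natCast, taylor_C]
  push_cast [C_eq_natCast, C_1]
  ring

lemma taylor_one_sub_normalOrderCoeff (n k : ℕ) :
    taylor 1 (normalOrderCoeff R n k) - normalOrderCoeff R n k =
      ((k + 1 : ℕ) : R[X]) * normalOrderCoeff R n (k + 1) := by
  induction n generalizing k with
  | zero => cases k <;> simp [normalOrderCoeff]
  | succ n ih =>
    cases k with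
    | zero =>
      have h := taylor_one_mul_X_add_natCast_sub (normalOrderCoeff R n 0) 0
      rw [Nat.cast_zero, add_zero] at h
      rw [normalOrderCoeff, h, ih, normalOrderCoeff]
      ring
    | succ k =>
      simp only [normalOrderCoeff, map_add]
      rw [add_sub_add_comm, taylor_one_mul_X_add_natCast_sub, ih, ih]
      push_cast
      ring

variable {A : Type*} [Ring A] [Algebra R A] {x y : A}

lemma pow_mul_eq_add_natCast_mul (h : y * x = x * y + y) (k : ℕ) :
    y ^ k * x = (x + k) * y ^ k := by
  induction k with
  | zero => simp
  | succ k ih =>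
    rw [pow_succ, mul_assoc, h, mul_add, ← mul_assoc, ih]
    push_cast
    noncomm_ring

lemma add_pow_eq_sum_normalOrderCoeff (h : y * x = x * y + y) (n : ℕ) :
    (x + y) ^ n = ∑ k ∈ Finset.range (n + 1), aeval x (normalOrderCoeff R n k) * y ^ k := by
  induction n with
  | zero => simp [normalOrderCoeff]
  | succ n ih =>
    set g : ℕ → A := fun k => aeval x (normalOrderCoeff R n k * (X + (k : R[X]))) * y ^ k
    have hterm : ∀ k, aeval x (normalOrderCoeff R n k) * y ^ k * (x + y) =
        g k + aeval x (normalOrderCoeff R n k) * y ^ (k + 1) := by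
      intro k
      rw [mul_add, mul_assoc, mul_assoc, pow_mul_eq_add_natCast_mul h, ← pow_succ]
      simp only [g, map_mul, map_add, aeval_X, map_natCast, mul_assoc]
    have hg : ∑ k ∈ Finset.range (n + 1), g k = ∑ k ∈ Finset.range (n + 1), g (k + 1) + g 0 := by
      rw [← Finset.sum_range_succ', Finset.sum_range_succ _ (n + 1)]
      simp [g, normalOrderCoeff_of_lt n.lt_succ_self]
    rw [pow_succ, ih, Finset.sum_mul, Finset.sum_congr rfl fun k _ => hterm k,
      Finset.sum_add_distrib, hg, Finset.sum_range_succ' _ (n + 1)]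
    simp only [g, normalOrderCoeff, map_add, add_mul, Finset.sum_add_distrib]
    rw [Nat.cast_zero, add_zero]
    abel

end NormalOrder

section CharP

variable {R : Type*} [CommRing R] (p : ℕ) [Fact p.Prime] [CharP R p]

lemma normalOrderCoeff_char_one : normalOrderCoeff R p 1 = 1 := by
  have h := taylor_one_sub_normalOrderCoeff (R := R) p 0
  rwa [normalOrderCoeff_zero_right, taylor_X_pow, C_1, add_pow_char, one_pow,
    add_sub_cancel_left, zero_add, Nat.cast_one, one_mul, eq_comm] at h

lemma normalOrderCoeff_char_succ_eq_zero {k : ℕ} (hkp : k + 1 < p)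
    (hk : taylor 1 (normalOrderCoeff R p k) = normalOrderCoeff R p k) :
    normalOrderCoeff R p (k + 1) = 0 := by
  have h := taylor_one_sub_normalOrderCoeff (R := R) p k
  rw [hk, sub_self, eq_comm] at h
  have hunit : IsUnit ((k + 1 : ℕ) : R[X]) :=
    (CharP.isUnit_natCast_iff Fact.out).2 (Nat.not_dvd_of_pos_of_lt k.succ_pos hkp)
  exact hunit.mul_right_eq_zero.1 h

lemma normalOrderCoeff_char_of_lt {k : ℕ} (hk : 2 ≤ k) (hkp : k < p) :
    normalOrderCoeff R p k = 0 := by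
  induction k, hk using Nat.le_induction with
  | base =>
    refine normalOrderCoeff_char_succ_eq_zero p hkp ?_
    rw [normalOrderCoeff_char_one, taylor_one, C_1]
  | succ k hk ih =>
    exact normalOrderCoeff_char_succ_eq_zero p hkp (by rw [ih (by omega), map_zero])

end CharP

theorem add_pow_char_of_mul_eq_add (R : Type*) {A : Type*} [CommRing R] [Ring A] [Algebra R A]
    (p : ℕ) [Fact p.Prime] [CharP R p] {x y : A} (h : y * x = x * y + y) :
    (x + y) ^ p = x ^ p + y ^ p + y := by
  obtain ⟨q, rfl⟩ : ∃ q, p = q + 2 := ⟨p - 2, by have := (Fact.out : p.Prime).two_le; omega⟩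
  have hmid : ∀ k ∈ Finset.range q,
      aeval x (normalOrderCoeff R (q + 2) (k + 2)) * y ^ (k + 2) = 0 := fun k hk => by
    rw [normalOrderCoeff_char_of_lt (q + 2) le_add_self (by simpa using hk), map_zero, zero_mul]
  rw [add_pow_eq_sum_normalOrderCoeff (R := R) h, Finset.sum_range_succ, Finset.sum_range_succ',
    Finset.sum_range_succ', Finset.sum_eq_zero hmid, normalOrderCoeff_self,
    normalOrderCoeff_char_one, normalOrderCoeff_zero_right]
  simp only [map_one, map_pow, aeval_X, pow_one, pow_zero, one_mul, mul_one, zero_add]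
  abel

section SymbolPair

variable {R A : Type*} [CommRing R] [Ring A] [Algebra R A] {p : ℕ} {a b : R} {u v : A}

structure IsSymbolPair (p : ℕ) (a b : R) (u v : A) : Prop where
  pow_sub_self : u ^ p - u = algebraMap R A a
  pow_eq : v ^ p = algebraMap R A b
  comm : v * u = u * v + v

variable [Fact p.Prime] [CharP R p]

theorem IsSymbolPair.add (h : IsSymbolPair p a b u v) : IsSymbolPair p (a + b) b (u + v) v where
  pow_sub_self := by
    rw [add_pow_char_of_mul_eq_add R p h.comm, map_add, ← h.pow_sub_self, ← h.pow_eq]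
    abel
  pow_eq := h.pow_eq
  comm := by rw [mul_add, add_mul, h.comm]; abel

theorem IsSymbolPair.sub (h : IsSymbolPair p (a + b) b u v) : IsSymbolPair p a b (u - v) v := by
  have comm : v * (u - v) = (u - v) * v + v := by rw [mul_sub, sub_mul, h.comm]; abel
  refine ⟨?_, h.pow_eq, comm⟩
  have hu := add_pow_char_of_mul_eq_add R p comm
  rw [sub_add_cancel] at hu
  calc (u - v) ^ p - (u - v) = (u ^ p - u) - v ^ p := by rw [hu]; abel
    _ = algebraMap R A a := by rw [h.pow_sub_self, map_add, h.pow_eq, add_sub_cancel_right]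

end SymbolPair

namespace SymbolAlg

variable (F : Type) [Field F] (p : ℕ) (a b : F)

noncomputable def x : SymbolAlg F p a b :=
  RingQuot.mkAlgHom F (SymbolRel F p a b) (FreeAlgebra.ι F 0)

noncomputable def y : SymbolAlg F p a b :=
  RingQuot.mkAlgHom F (SymbolRel F p a b) (FreeAlgebra.ι F 1)

theorem isSymbolPair_x_y : IsSymbolPair p a b (x F p a b) (y F p a b) where
  pow_sub_self := by
    simpa only [x, map_sub, map_pow, AlgHom.commutes] using
      RingQuot.mkAlgHom_rel F (SymbolRel.x (p := p) (a := a) (b := b))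
  pow_eq := by
    simpa only [y, map_pow, AlgHom.commutes] using
      RingQuot.mkAlgHom_rel F (SymbolRel.y (p := p) (a := a) (b := b))
  comm := by
    simpa only [x, y, map_sub, map_mul, sub_eq_iff_eq_add'] using
      RingQuot.mkAlgHom_rel F (SymbolRel.comm (p := p) (a := a) (b := b))

variable {F p a b} {A : Type*} [Ring A] [Algebra F A] {u v : A}

noncomputable def lift (h : IsSymbolPair p a b u v) : SymbolAlg F p a b →ₐ[F] A :=
  RingQuot.liftAlgHom F ⟨FreeAlgebra.lift F ![u, v], fun _ _ r => by
    cases r <;>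
      simp only [map_sub, map_mul, map_pow, FreeAlgebra.lift_ι_apply, Matrix.cons_val_zero,
        Matrix.cons_val_one, AlgHom.commutes, h.pow_sub_self, h.pow_eq, h.comm,
        add_sub_cancel_left]⟩

@[simp]
theorem lift_x (h : IsSymbolPair p a b u v) : lift h (x F p a b) = u := by
  simp [lift, x]

@[simp]
theorem lift_y (h : IsSymbolPair p a b u v) : lift h (y F p a b) = v := by
  simp [lift, y]

theorem algHom_ext {f g : SymbolAlg F p a b →ₐ[F] A} (hx : f (x F p a b) = g (x F p a b))
    (hy : f (y F p a b) = g (y F p a b)) : f = g := by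
  refine RingQuot.ringQuot_ext' F f g (FreeAlgebra.hom_ext (funext fun i => ?_))
  fin_cases i
  exacts [hx, hy]

end SymbolAlg

open SymbolAlg in
theorem symbol_add_beta_left_general (p : ℕ) (hp : p.Prime) (F : Type) [Field F] [CharP F p]
    (α β : F) :
    Nonempty (SymbolAlg F p α β ≃ₐ[F] SymbolAlg F p (α + β) β) := by
  have := Fact.mk hp
  have hsub := (isSymbolPair_x_y F p (α + β) β).sub
  have hadd := (isSymbolPair_x_y F p α β).add
  exact ⟨AlgEquiv.ofAlgHom (lift hsub) (lift hadd)
    (algHom_ext (by simp) (by simp)) (algHom_ext (by simp) (by simp))⟩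

/-- `[α,β)_{p,F} ≅ [α+β,β)_{p,F}`. -/
theorem symbol_add_beta_left (p : ℕ) (hp : p.Prime) (F : Type) [Field F] [CharP F p]
    (α β : F) (hβ : β ≠ 0) :
    Nonempty (SymbolAlg F p α β ≃ₐ[F] SymbolAlg F p (α + β) β) :=
  symbol_add_beta_left_general p hp F α β
end
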